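/- In the setting of the occupancy-difference lemma, for each step h > 1 the per-step occupancy gaps satisfy Δ_h ≤ δ_{h−1} + Δ_{h−1}, and Δ_1 = 0, where Δ_h = ‖d_π^h − d_{π'}^h‖_1 and δ_h = 2 E_{s∼d_π^h}[TV(π(·|s), π'(·|s))]. -/
import Mathlib


open scoped Classical
open Finset

noncomputable section

/-- A finite-horizon MDP with finite state space `S`, finite action space `A`,
transition kernel `P`, reward function `R` (the reward received on the
transition `(s, a, s')`, valued in `[0,1]`), and initial state distribution `init`. -/
structure MDP (S A : Type) [Fintype S] [Fintype A] where
  P : S → A → S → ℝ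
  R : S → A → S → ℝ
  init : S → ℝ
  P_nonneg : ∀ s a s', 0 ≤ P s a s'
  P_sum_one : ∀ s a, ∑ s', P s a s' = 1
  R_nonneg : ∀ s a s', 0 ≤ R s a s'
  R_le_one : ∀ s a s', R s a s' ≤ 1
  init_nonneg : ∀ s, 0 ≤ init s
  init_sum_one : ∑ s, init s = 1

/-- A trajectory of horizon `H`: the states `s_0, …, s_H` and actions `a_0, …, a_{H-1}`. -/
abbrev Traj (S A : Type) (H : ℕ) := (Fin (H + 1) → S) × (Fin H → A)

variable {S A : Type} [Fintype S] [Fintype A]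

/-- Real-valued indicator of a proposition. -/
def ind (p : Prop) : ℝ := if p then 1 else 0

/-- A (Markovian, stochastic) policy: a probability distribution over actions at every state. -/
def IsPolicy (π : S → A → ℝ) : Prop :=
  (∀ s a, 0 ≤ π s a) ∧ (∀ s, ∑ a, π s a = 1)

/-- A return-conditioned policy: a distribution over actions for every state and target return. -/
def IsCondPolicy (π : S → ℝ → A → ℝ) : Prop :=
  (∀ s g a, 0 ≤ π s g a) ∧ (∀ s g, ∑ a, π s g a = 1)

/-- Probability of a trajectory under policy `π` in MDP `M`. -/
def trajProb (M : MDP S A) (π : S → A → ℝ) (H : ℕ) (τ : Traj S A H) : ℝ :=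
  M.init (τ.1 0) *
    ∏ t : Fin H, (π (τ.1 t.castSucc) (τ.2 t) * M.P (τ.1 t.castSucc) (τ.2 t) (τ.1 t.succ))

/-- Cumulative return `g(τ)` of a trajectory. -/
def ret (M : MDP S A) (H : ℕ) (τ : Traj S A H) : ℝ :=
  ∑ t : Fin H, M.R (τ.1 t.castSucc) (τ.2 t) (τ.1 t.succ)

/-- `J(π)`: expected return of policy `π`. -/
def J (M : MDP S A) (π : S → A → ℝ) (H : ℕ) : ℝ :=
  ∑ τ : Traj S A H, trajProb M π H τ * ret M H τ

/-- Unnormalized joint occupancy (over the `H` decision steps) of (state, action, return):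
`∑_t P_β(s_t = s, a_t = a, g(τ) = g)`. -/
def occSA (M : MDP S A) (β : S → A → ℝ) (H : ℕ) (s : S) (a : A) (g : ℝ) : ℝ :=
  ∑ t : Fin H, ∑ τ : Traj S A H,
    trajProb M β H τ * ind (τ.1 t.castSucc = s ∧ τ.2 t = a ∧ ret M H τ = g)

/-- Unnormalized joint occupancy of (state, return). -/
def occS (M : MDP S A) (β : S → A → ℝ) (H : ℕ) (s : S) (g : ℝ) : ℝ :=
  ∑ t : Fin H, ∑ τ : Traj S A H,
    trajProb M β H τ * ind (τ.1 t.castSucc = s ∧ ret M H τ = g)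

/-- Unnormalized state occupancy `∑_t P_β(s_t = s)`. -/
def visitMass (M : MDP S A) (β : S → A → ℝ) (H : ℕ) (s : S) : ℝ :=
  ∑ t : Fin H, ∑ τ : Traj S A H, trajProb M β H τ * ind (τ.1 t.castSucc = s)

/-- The return-conditioned action distribution `P_β(a | s, g)`. -/
def rcslCond (M : MDP S A) (β : S → A → ℝ) (H : ℕ) (s : S) (g : ℝ) : A → ℝ :=
  fun a => occSA M β H s a g / occS M β H s g

/-- The infinite-data RCSL policy `π_f^RCSL(a|s) = P_β(a | s, g = f(s))`. -/
def rcslPolicy (M : MDP S A) (β : S → A → ℝ) (H : ℕ) (f : S → ℝ) : S → A → ℝ :=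
  fun s => rcslCond M β H s (f s)

/-- `ε`-near-determinism with respect to deterministic dynamics `T` and rewards `r0`:
`P(r ≠ r0(s,a) or s' ≠ T(s,a) | s, a) ≤ ε` at every `(s,a)`. -/
def NearDet (M : MDP S A) (T : S → A → S) (r0 : S → A → ℝ) (ε : ℝ) : Prop :=
  ∀ s a, ∑ s', M.P s a s' * ind (¬(s' = T s a ∧ M.R s a s' = r0 s a)) ≤ ε

/-- `d_π^t(s) = P_π(s_t = s)`, the distribution of the state at step `t`. -/
def stepDist (M : MDP S A) (π : S → A → ℝ) (H : ℕ) (t : Fin (H + 1)) (s : S) : ℝ :=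
  ∑ τ : Traj S A H, trajProb M π H τ * ind (τ.1 t = s)

/-- `d_π(s)`: average state occupancy over the `H` decision steps. -/
def avgOcc (M : MDP S A) (π : S → A → ℝ) (H : ℕ) (s : S) : ℝ :=
  (1 / (H : ℝ)) * ∑ t : Fin H, stepDist M π H t.castSucc s

/-- Total variation distance between two finitely supported action distributions. -/
def tv (p q : A → ℝ) : ℝ := (1 / 2) * ∑ a, |p a - q a|

/-- Kullback–Leibler divergence between two finitely supported action distributions. -/
def klDiv (p q : A → ℝ) : ℝ := ∑ a, p a * Real.log (p a / q a)

/-- The expected loss `L(π̂) = E_{s ∼ P_β} E_{g ∼ P_β(·|s)} [KL(P_β(·|s,g) ‖ π̂(·|s,g))]`. -/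
def expLoss (M : MDP S A) (β : S → A → ℝ) (H : ℕ) (pihat : S → ℝ → A → ℝ) : ℝ :=
  (1 / (H : ℝ)) * ∑ t : Fin H, ∑ τ : Traj S A H, trajProb M β H τ *
    klDiv (rcslCond M β H (τ.1 t.castSucc) (ret M H τ)) (pihat (τ.1 t.castSucc) (ret M H τ))

/-- Joint occupancy of (state, action) restricted to trajectories with return `≥ grho`. -/
def occSAge (M : MDP S A) (β : S → A → ℝ) (H : ℕ) (s : S) (a : A) (grho : ℝ) : ℝ :=
  ∑ t : Fin H, ∑ τ : Traj S A H,
    trajProb M β H τ * ind (τ.1 t.castSucc = s ∧ τ.2 t = a ∧ grho ≤ ret M H τ)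

/-- State occupancy restricted to trajectories with return `≥ grho`. -/
def occSge (M : MDP S A) (β : S → A → ℝ) (H : ℕ) (s : S) (grho : ℝ) : ℝ :=
  ∑ t : Fin H, ∑ τ : Traj S A H,
    trajProb M β H τ * ind (τ.1 t.castSucc = s ∧ grho ≤ ret M H τ)

/-- The top-% BC policy `π_ρ(a|s) = P_β(a | s, g ≥ g_ρ)`. -/
def topPolicy (M : MDP S A) (β : S → A → ℝ) (H : ℕ) (grho : ℝ) : S → A → ℝ :=
  fun s a => occSAge M β H s a grho / occSge M β H s grho

/-- `P_β(g ≥ grho)`. -/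
def retGeProb (M : MDP S A) (β : S → A → ℝ) (H : ℕ) (grho : ℝ) : ℝ :=
  ∑ τ : Traj S A H, trajProb M β H τ * ind (grho ≤ ret M H τ)

/-- The conditional state distribution `P_β(s | g ≥ grho)` (occupancy-averaged). -/
def condStateGe (M : MDP S A) (β : S → A → ℝ) (H : ℕ) (grho : ℝ) (s : S) : ℝ :=
  occSge M β H s grho / ((H : ℝ) * retGeProb M β H grho)

/-- `L_ρ(π̂) = E_{s ∼ P_β(·|g ≥ g_ρ)}[KL(π_ρ(·|s) ‖ π̂(·|s))]`. -/
def lossTop (M : MDP S A) (β : S → A → ℝ) (H : ℕ) (grho : ℝ) (pihat : S → A → ℝ) : ℝ :=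
  ∑ s, condStateGe M β H grho s * klDiv (topPolicy M β H grho s) (pihat s)

/-- State reached after `t` steps of the open-loop action sequence `as`
under the deterministic dynamics `T`, starting from `s1`. -/
def roll (T : S → A → S) (s1 : S) (as : ℕ → A) : ℕ → S
  | 0 => s1
  | t + 1 => T (roll T s1 as t) (as t)

/-- Extension of a finite action sequence to `ℕ` (junk beyond the horizon). -/
def extAct [Nonempty A] {H : ℕ} (as : Fin H → A) : ℕ → A :=
  fun t => if h : t < H then as ⟨t, h⟩ else Classical.arbitrary A

/-- `g(s_1, a_{1:H})`: return of the open-loop action sequence under the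
deterministic dynamics `(T, r0)`. -/
def openRet (T : S → A → S) (r0 : S → A → ℝ) (H : ℕ) (s1 : S) (as : ℕ → A) : ℝ :=
  ∑ t ∈ Finset.range H, r0 (roll T s1 as t) (as t)

/-- The (stochastic representation of a) deterministic policy `s ↦ pid s`. -/
def detPol (pid : S → A) : S → A → ℝ := fun s a => ind (a = pid s)

/-- Return of the deterministic policy `pid` rolled out for `H` steps from `s`
under the deterministic dynamics `(T, r0)`. -/
def detReturn (T : S → A → S) (r0 : S → A → ℝ) (pid : S → A) (H : ℕ) (s : S) : ℝ :=
  ∑ t ∈ Finset.range H, r0 ((fun x => T x (pid x))^[t] s) (pid ((fun x => T x (pid x))^[t] s))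

/-- The optimal value function `V*` with `n` steps to go. -/
def Vstar (M : MDP S A) [Nonempty A] : ℕ → S → ℝ
  | 0 => fun _ => 0
  | n + 1 => fun s =>
      Finset.univ.sup' Finset.univ_nonempty
        (fun a => ∑ s', M.P s a s' * (M.R s a s' + Vstar M n s'))

/-- Probability of a trajectory conditioned on starting at `s1`. -/
def trajProbFrom (M : MDP S A) (π : S → A → ℝ) (H : ℕ) (s1 : S) (τ : Traj S A H) : ℝ :=
  ind (τ.1 0 = s1) *
    ∏ t : Fin H, (π (τ.1 t.castSucc) (τ.2 t) * M.P (τ.1 t.castSucc) (τ.2 t) (τ.1 t.succ))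

/-- `P_β(g = g₀ | s_1 = s1)`. -/
def retProbFrom (M : MDP S A) (β : S → A → ℝ) (H : ℕ) (s1 : S) (g : ℝ) : ℝ :=
  ∑ τ : Traj S A H, trajProbFrom M β H s1 τ * ind (ret M H τ = g)

/-- `P_π(a_{1:H} | s_1)`: probability of an open-loop action sequence under `π` from `s1`. -/
def actSeqProb (M : MDP S A) (π : S → A → ℝ) (H : ℕ) (s1 : S) (as : Fin H → A) : ℝ :=
  ∑ ss : Fin (H + 1) → S, ind (ss 0 = s1) *
    ∏ t : Fin H, (π (ss t.castSucc) (as t) * M.P (ss t.castSucc) (as t) (ss t.succ))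

/-- Probability of an i.i.d. dataset of `N` trajectories sampled from `β`. -/
def dataProb (M : MDP S A) (β : S → A → ℝ) (H N : ℕ) (D : Fin N → Traj S A H) : ℝ :=
  ∏ i, trajProb M β H (D i)

/-- Empirical cross-entropy (negative log likelihood) loss of a return-conditioned policy. -/
def empLoss (M : MDP S A) (H N : ℕ) (π : S → ℝ → A → ℝ) (D : Fin N → Traj S A H) : ℝ :=
  (1 / ((N : ℝ) * (H : ℝ))) * ∑ i, ∑ t : Fin H,
    -Real.log (π ((D i).1 t.castSucc) (ret M H (D i)) ((D i).2 t))

/-- Population cross-entropy loss `L̄(π) = −E_{(s,a,g) ∼ P_β}[log π(a|s,g)]`. -/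
def popCE (M : MDP S A) (β : S → A → ℝ) (H : ℕ) (π : S → ℝ → A → ℝ) : ℝ :=
  (1 / (H : ℝ)) * ∑ t : Fin H, ∑ τ : Traj S A H, trajProb M β H τ *
    (-Real.log (π (τ.1 t.castSucc) (ret M H τ) (τ.2 t)))

/-- Entropy term `H_β = −E_{(s,a,g) ∼ P_β}[log P_β(a|s,g)]`. -/
def entB (M : MDP S A) (β : S → A → ℝ) (H : ℕ) : ℝ :=
  (1 / (H : ℝ)) * ∑ t : Fin H, ∑ τ : Traj S A H, trajProb M β H τ *
    (-Real.log (rcslCond M β H (τ.1 t.castSucc) (ret M H τ) (τ.2 t)))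

/-- Empirical cross-entropy loss of top-% BC: only trajectories with return `≥ grho` are kept. -/
def empLossTop (M : MDP S A) (H N : ℕ) (grho : ℝ) (π : S → A → ℝ)
    (D : Fin N → Traj S A H) : ℝ :=
  ∑ i, ind (grho ≤ ret M H (D i)) * ∑ t : Fin H,
    -Real.log (π ((D i).1 t.castSucc) ((D i).2 t))

/-- Joint occupancy of (state, action, return) for a general data distribution `W`
over trajectories. -/
def occSAW (H : ℕ) (W : Traj S A H → ℝ) (M : MDP S A) (s : S) (a : A) (g : ℝ) : ℝ :=
  ∑ t : Fin H, ∑ τ : Traj S A H, W τ * ind (τ.1 t.castSucc = s ∧ τ.2 t = a ∧ ret M H τ = g)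

/-- Occupancy of (state, return) for a general data distribution `W` over trajectories. -/
def occSW (H : ℕ) (W : Traj S A H → ℝ) (M : MDP S A) (s : S) (g : ℝ) : ℝ :=
  ∑ t : Fin H, ∑ τ : Traj S A H, W τ * ind (τ.1 t.castSucc = s ∧ ret M H τ = g)

/-- The RCSL policy obtained from a general data distribution `W` over trajectories. -/
def rcslPolicyW (H : ℕ) (W : Traj S A H → ℝ) (M : MDP S A) (f : S → ℝ) : S → A → ℝ :=
  fun s a => occSAW H W M s a (f s) / occSW H W M s (f s)


section Aux

variable (M : MDP S A) (π : S → A → ℝ)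

lemma trajProb_nonneg (hπ : IsPolicy π) (H : ℕ) (τ : Traj S A H) :
    0 ≤ trajProb M π H τ :=
  mul_nonneg (M.init_nonneg _) (Finset.prod_nonneg fun t _ =>
    mul_nonneg (hπ.1 _ _) (M.P_nonneg _ _ _))

lemma trajProb_snoc (H : ℕ) (ss : Fin (H + 1) → S) (as : Fin H → A) (s'' : S) (a : A) :
    trajProb M π (H + 1) (Fin.snoc ss s'', Fin.snoc as a) =
      trajProb M π H (ss, as) *
        (π (ss (Fin.last H)) a * M.P (ss (Fin.last H)) a s'') := by
  unfold trajProb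
  rw [Fin.prod_univ_castSucc]
  have h0 : (Fin.snoc ss s'' : Fin (H + 2) → S) 0 = ss 0 := by
    rw [show (0 : Fin (H + 2)) = Fin.castSucc 0 by simp, Fin.snoc_castSucc]
  simp only [h0, Fin.succ_castSucc, Fin.snoc_castSucc,
    Fin.succ_last, Fin.snoc_last]
  ring

/-- Deleting the last state and action gives an equivalence of trajectory spaces. -/
def snocTrajEquiv (H : ℕ) :
    (((Fin (H + 1) → S) × (Fin H → A)) × S × A) ≃ Traj S A (H + 1) where
  toFun := fun x => (Fin.snoc x.1.1 x.2.1, Fin.snoc x.1.2 x.2.2)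
  invFun := fun τ => ((Fin.init τ.1, Fin.init τ.2), τ.1 (Fin.last (H + 1)), τ.2 (Fin.last H))
  left_inv := by
    rintro ⟨⟨ss, as⟩, s'', a⟩
    simp [Fin.init_snoc, Fin.snoc_last]
  right_inv := by
    rintro ⟨ss, as⟩
    simp [Fin.snoc_init_self]

lemma sum_traj_snoc (H : ℕ) (F : Traj S A (H + 1) → ℝ) :
    ∑ τ : Traj S A (H + 1), F τ =
      ∑ p : (Fin (H + 1) → S) × (Fin H → A), ∑ s'', ∑ a,
        F (Fin.snoc p.1 s'', Fin.snoc p.2 a) := by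
  rw [← Equiv.sum_comp (snocTrajEquiv (S := S) (A := A) H) F]
  rw [Fintype.sum_prod_type]
  refine Finset.sum_congr rfl fun p _ => ?_
  rw [Fintype.sum_prod_type]
  rfl

lemma marg_cast (hπ : IsPolicy π) (H : ℕ) (k : Fin (H + 1)) (g : S → ℝ) :
    ∑ τ : Traj S A (H + 1), trajProb M π (H + 1) τ * g (τ.1 k.castSucc) =
      ∑ τ : Traj S A H, trajProb M π H τ * g (τ.1 k) := by
  rw [sum_traj_snoc]
  refine Finset.sum_congr rfl fun p _ => ?_
  have : ∀ s'' a, trajProb M π (H + 1) (Fin.snoc p.1 s'', Fin.snoc p.2 a) *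
      g ((Fin.snoc p.1 s'' : Fin (H + 2) → S) k.castSucc) =
      (trajProb M π H p * g (p.1 k)) *
        (π (p.1 (Fin.last H)) a * M.P (p.1 (Fin.last H)) a s'') := by
    intro s'' a
    rw [Fin.snoc_castSucc, trajProb_snoc]
    ring
  simp only [this]
  rw [Finset.sum_comm]
  have h2 : ∀ a : A, ∑ s'', (trajProb M π H p * g (p.1 k)) *
      (π (p.1 (Fin.last H)) a * M.P (p.1 (Fin.last H)) a s'') =
      (trajProb M π H p * g (p.1 k)) * π (p.1 (Fin.last H)) a := by
    intro a
    have : ∀ s'' : S, (trajProb M π H p * g (p.1 k)) *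
        (π (p.1 (Fin.last H)) a * M.P (p.1 (Fin.last H)) a s'') =
        ((trajProb M π H p * g (p.1 k)) * π (p.1 (Fin.last H)) a) *
          M.P (p.1 (Fin.last H)) a s'' := fun s'' => by ring
    simp only [this, ← Finset.mul_sum, M.P_sum_one, mul_one]
  simp only [h2, ← Finset.mul_sum, hπ.2, mul_one]

lemma marg_last (hπ : IsPolicy π) (H : ℕ) (g : S → ℝ) :
    ∑ τ : Traj S A (H + 1), trajProb M π (H + 1) τ * g (τ.1 (Fin.last (H + 1))) =
      ∑ τ : Traj S A H, trajProb M π H τ *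
        (∑ a, π (τ.1 (Fin.last H)) a * ∑ s, M.P (τ.1 (Fin.last H)) a s * g s) := by
  rw [sum_traj_snoc]
  refine Finset.sum_congr rfl fun p _ => ?_
  have : ∀ s'' a, trajProb M π (H + 1) (Fin.snoc p.1 s'', Fin.snoc p.2 a) *
      g ((Fin.snoc p.1 s'' : Fin (H + 2) → S) (Fin.last (H + 1))) =
      trajProb M π H p *
        (π (p.1 (Fin.last H)) a * (M.P (p.1 (Fin.last H)) a s'' * g s'')) := by
    intro s'' a
    rw [Fin.snoc_last, trajProb_snoc]
    ring
  simp only [this]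
  rw [Finset.sum_comm]
  simp only [← Finset.mul_sum]

lemma step_marg (hπ : IsPolicy π) :
    ∀ (H : ℕ) (t : Fin H) (g : S → ℝ),
    ∑ τ : Traj S A H, trajProb M π H τ * g (τ.1 t.succ) =
      ∑ τ : Traj S A H, trajProb M π H τ *
        (∑ a, π (τ.1 t.castSucc) a * ∑ s, M.P (τ.1 t.castSucc) a s * g s) := by
  intro H
  induction H with
  | zero => exact fun t => t.elim0
  | succ n ih =>
    intro t g
    refine Fin.lastCases ?_ ?_ t
    · rw [Fin.succ_last]
      rw [marg_last M π hπ n g]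
      exact (marg_cast M π hπ n (Fin.last n) (fun s' => ∑ a, π s' a * ∑ s, M.P s' a s * g s)).symm
    · intro i
      rw [Fin.succ_castSucc, marg_cast M π hπ n i.succ g, ih i g]
      exact (marg_cast M π hπ n i.castSucc (fun s' => ∑ a, π s' a * ∑ s, M.P s' a s * g s)).symm

lemma stepDist_zero (hπ : IsPolicy π) :
    ∀ H : ℕ, ∀ s : S, stepDist M π H 0 s = M.init s := by
  intro H
  induction H with
  | zero =>
    intro s
    unfold stepDist trajProb
    simp only [Finset.univ_eq_empty, Finset.prod_empty, mul_one]
    rw [Fintype.sum_prod_type]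
    rw [Fintype.sum_equiv (Equiv.funUnique (Fin 1) S)
      (fun ss => ∑ _as : Fin 0 → A, M.init (ss 0) * ind (ss 0 = s))
      (fun x => M.init x * ind (x = s)) (fun ss => by simp)]
    unfold ind
    simp
  | succ n ih =>
    intro s
    unfold stepDist
    have h0 : (0 : Fin (n + 2)) = (0 : Fin (n + 1)).castSucc := by simp
    rw [h0, marg_cast M π hπ n 0 (fun s' => ind (s' = s))]
    exact ih s

lemma stepDist_succ (hπ : IsPolicy π) (H : ℕ) (t : Fin H) (s : S) :
    stepDist M π H t.succ s =
      ∑ s', stepDist M π H t.castSucc s' * ∑ a, π s' a * M.P s' a s := by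
  unfold stepDist
  rw [step_marg M π hπ H t (fun s' => ind (s' = s))]
  have hP : ∀ s'' a, (∑ s0, M.P s'' a s0 * ind (s0 = s)) = M.P s'' a s := by
    intro s'' a
    unfold ind
    simp
  simp only [hP]
  have hsum : ∀ τ : Traj S A H,
      (∑ a, π (τ.1 t.castSucc) a * M.P (τ.1 t.castSucc) a s) =
      ∑ s', ind (τ.1 t.castSucc = s') * ∑ a, π s' a * M.P s' a s := by
    intro τ
    unfold ind
    simp
  calc ∑ τ : Traj S A H, trajProb M π H τ *
        ∑ a, π (τ.1 t.castSucc) a * M.P (τ.1 t.castSucc) a s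
      = ∑ τ : Traj S A H, ∑ s', (trajProb M π H τ * ind (τ.1 t.castSucc = s')) *
          ∑ a, π s' a * M.P s' a s := by
        refine Finset.sum_congr rfl fun τ _ => ?_
        rw [hsum τ, Finset.mul_sum]
        exact Finset.sum_congr rfl fun s' _ => by ring
    _ = ∑ s', (∑ τ : Traj S A H, trajProb M π H τ * ind (τ.1 t.castSucc = s')) *
          ∑ a, π s' a * M.P s' a s := by
        rw [Finset.sum_comm]
        exact Finset.sum_congr rfl fun s' _ => (Finset.sum_mul _ _ _).symm

lemma stepDist_nonneg (hπ : IsPolicy π) (H : ℕ) (k : Fin (H + 1)) (s : S) :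
    0 ≤ stepDist M π H k s := by
  refine Finset.sum_nonneg fun τ _ => mul_nonneg (trajProb_nonneg M π hπ H τ) ?_
  unfold ind
  positivity

end Aux

/-- per-step recursion in the proof of Lemma 1.
With `Δ_h = ‖d_π^h − d_{π'}^h‖₁` and `δ_h = 2 E_{s ∼ d_π^h}[TV(π(·|s), π'(·|s))]`,
we have `Δ_1 = 0` and `Δ_{h+1} ≤ δ_h + Δ_h` for every step `h`. -/
theorem occupancy_stepwise_recursion
    {S A : Type} [Fintype S] [Fintype A]
    (M : MDP S A) (H : ℕ)
    (π π' : S → A → ℝ) (hπ : IsPolicy π) (hπ' : IsPolicy π') :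
    (∑ s, |stepDist M π H 0 s - stepDist M π' H 0 s|) = 0 ∧
    ∀ t : Fin H,
      ∑ s, |stepDist M π H t.succ s - stepDist M π' H t.succ s| ≤
        (2 * ∑ s, stepDist M π H t.castSucc s * tv (π s) (π' s)) +
          ∑ s, |stepDist M π H t.castSucc s - stepDist M π' H t.castSucc s| := by
  constructor
  · refine Finset.sum_eq_zero fun s _ => ?_
    rw [stepDist_zero M π hπ H s, stepDist_zero M π' hπ' H s, sub_self, abs_zero]
  · intro t
    have hd : ∀ s', 0 ≤ stepDist M π H t.castSucc s' :=
      fun s' => stepDist_nonneg M π hπ H t.castSucc s'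
    have hK' : ∀ s' s, 0 ≤ ∑ a, π' s' a * M.P s' a s :=
      fun s' s => Finset.sum_nonneg fun a _ => mul_nonneg (hπ'.1 _ _) (M.P_nonneg _ _ _)
    have hKsum : ∀ s' : S, ∑ s, (∑ a, π' s' a * M.P s' a s) = 1 := by
      intro s'
      rw [Finset.sum_comm]
      simp only [← Finset.mul_sum, M.P_sum_one, mul_one]
      exact hπ'.2 s'
    have htv : ∀ s' : S,
        ∑ s, |(∑ a, π s' a * M.P s' a s) - ∑ a, π' s' a * M.P s' a s| ≤
          2 * tv (π s') (π' s') := by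
      intro s'
      have h1 : ∀ s : S, |(∑ a, π s' a * M.P s' a s) - ∑ a, π' s' a * M.P s' a s| ≤
          ∑ a, |π s' a - π' s' a| * M.P s' a s := by
        intro s
        rw [← Finset.sum_sub_distrib]
        refine (Finset.abs_sum_le_sum_abs _ _).trans
          (le_of_eq (Finset.sum_congr rfl fun a _ => ?_))
        rw [← sub_mul, abs_mul, abs_of_nonneg (M.P_nonneg _ _ _)]
      calc ∑ s, |(∑ a, π s' a * M.P s' a s) - ∑ a, π' s' a * M.P s' a s|
          ≤ ∑ s, ∑ a, |π s' a - π' s' a| * M.P s' a s :=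
            Finset.sum_le_sum fun s _ => h1 s
        _ = ∑ a, |π s' a - π' s' a| := by
            rw [Finset.sum_comm]
            simp only [← Finset.mul_sum, M.P_sum_one, mul_one]
        _ = 2 * tv (π s') (π' s') := by unfold tv; ring
    have hrw : ∀ s, stepDist M π H t.succ s - stepDist M π' H t.succ s =
        ∑ s', (stepDist M π H t.castSucc s' * ∑ a, π s' a * M.P s' a s -
          stepDist M π' H t.castSucc s' * ∑ a, π' s' a * M.P s' a s) := by
      intro s
      rw [stepDist_succ M π hπ H t s, stepDist_succ M π' hπ' H t s,
        Finset.sum_sub_distrib]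
    calc ∑ s, |stepDist M π H t.succ s - stepDist M π' H t.succ s|
        ≤ ∑ s, ∑ s',
            (stepDist M π H t.castSucc s' *
              |(∑ a, π s' a * M.P s' a s) - ∑ a, π' s' a * M.P s' a s| +
            |stepDist M π H t.castSucc s' - stepDist M π' H t.castSucc s'| *
              ∑ a, π' s' a * M.P s' a s) := by
          refine Finset.sum_le_sum fun s _ => ?_
          rw [hrw s]
          refine (Finset.abs_sum_le_sum_abs _ _).trans
            (Finset.sum_le_sum fun s' _ => ?_)
          have heq : stepDist M π H t.castSucc s' * (∑ a, π s' a * M.P s' a s) -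
              stepDist M π' H t.castSucc s' * (∑ a, π' s' a * M.P s' a s) =
              stepDist M π H t.castSucc s' *
                ((∑ a, π s' a * M.P s' a s) - ∑ a, π' s' a * M.P s' a s) +
              (stepDist M π H t.castSucc s' - stepDist M π' H t.castSucc s') *
                (∑ a, π' s' a * M.P s' a s) := by ring
          rw [heq]
          refine (abs_add_le _ _).trans (le_of_eq ?_)
          rw [abs_mul, abs_mul, abs_of_nonneg (hd s'), abs_of_nonneg (hK' s' _)]
      _ = ∑ s', (stepDist M π H t.castSucc s' *
              ∑ s, |(∑ a, π s' a * M.P s' a s) - ∑ a, π' s' a * M.P s' a s| +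
            |stepDist M π H t.castSucc s' - stepDist M π' H t.castSucc s'| *
              ∑ s, ∑ a, π' s' a * M.P s' a s) := by
          rw [Finset.sum_comm]
          simp only [Finset.sum_add_distrib, Finset.mul_sum]
      _ ≤ ∑ s', (stepDist M π H t.castSucc s' * (2 * tv (π s') (π' s')) +
            |stepDist M π H t.castSucc s' - stepDist M π' H t.castSucc s'| * 1) := by
          refine Finset.sum_le_sum fun s' _ => add_le_add
            (mul_le_mul_of_nonneg_left (htv s') (hd s')) (le_of_eq ?_)
          rw [hKsum s']
      _ = (2 * ∑ s, stepDist M π H t.castSucc s * tv (π s) (π' s)) +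
            ∑ s, |stepDist M π H t.castSucc s - stepDist M π' H t.castSucc s| := by
          rw [Finset.sum_add_distrib, Finset.mul_sum]
          congr 1
          · exact Finset.sum_congr rfl fun s _ => by ring
          · exact Finset.sum_congr rfl fun s _ => by ring
end
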